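/- Let A, B and A′, B′ be elements of GL₇(ℂ) such that both A and A′ are conjugate to diag(−1,−1,−1,−1,1,1,1), both B and B′ are conjugate to the block-diagonal unipotent matrix J(2)⊕J(2)⊕J(3), both (A·B)⁻¹ and (A′·B′)⁻¹ are conjugate to the single unipotent Jordan block J(7), and both pairs (A,B) and (A′,B′) are irreducible. Then there exists g ∈ GL₇(ℂ) with A′ = g·A·g⁻¹ and B′ = g·B·g⁻¹. -/

import Mathlib

open Matrix

noncomputable section

/-- `ℂ⁷`. -/
abbrev V7 : Type := Fin 7 → ℂ

/-- The 7×7 matrix with diagonal `d` and superdiagonal `s` (entry `(i, i+1)` is `s i`). -/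
def bidiag (d s : Fin 7 → ℂ) : Matrix (Fin 7) (Fin 7) ℂ :=
  Matrix.of fun i j => if j = i then d i else if (j : ℕ) = (i : ℕ) + 1 then s i else 0

/-- `diag(−1,−1,−1,−1,1,1,1)`. -/
def matA : Matrix (Fin 7) (Fin 7) ℂ := bidiag ![-1, -1, -1, -1, 1, 1, 1] 0

/-- `J(2) ⊕ J(2) ⊕ J(3)`. -/
def matB : Matrix (Fin 7) (Fin 7) ℂ := bidiag 1 ![1, 0, 1, 0, 1, 1, 0]

/-- `A` is conjugate (by an element of `GL₇(ℂ)`) to the matrix `X`. -/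
def IsConjTo (A X : Matrix (Fin 7) (Fin 7) ℂ) : Prop :=
  ∃ g : GL (Fin 7) ℂ,
    (g : Matrix (Fin 7) (Fin 7) ℂ) * X * ((g⁻¹ : GL (Fin 7) ℂ) : Matrix (Fin 7) (Fin 7) ℂ) = A

/-- The pair `(A, B)` is irreducible: the only subspaces of `ℂ⁷` invariant under both
`A` and `B` are `0` and `ℂ⁷`. -/
def IrredPair (A B : Matrix (Fin 7) (Fin 7) ℂ) : Prop :=
  ∀ W : Submodule ℂ V7,
    (∀ v ∈ W, A.mulVec v ∈ W) → (∀ v ∈ W, B.mulVec v ∈ W) → W = ⊥ ∨ W = ⊤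

/-- There is a nondegenerate symmetric bilinear form on `ℂ⁷` invariant under both `A` and `B`. -/
def HasInvariantForm (A B : Matrix (Fin 7) (Fin 7) ℂ) : Prop :=
  ∃ Φ : V7 →ₗ[ℂ] V7 →ₗ[ℂ] ℂ,
    (∀ v : V7, (∀ w : V7, Φ v w = 0) → v = 0) ∧
    (∀ v w : V7, Φ v w = Φ w v) ∧
    (∀ v w : V7, Φ (A.mulVec v) (A.mulVec w) = Φ v w) ∧
    (∀ v w : V7, Φ (B.mulVec v) (B.mulVec w) = Φ v w)

/-- There is a nonzero `ω ∈ Λ³(ℂ⁷)` fixed by the automorphisms of `Λ³(ℂ⁷)` induced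
by `A` and by `B`. -/
def HasInvariantTrivector (A B : Matrix (Fin 7) (Fin 7) ℂ) : Prop :=
  ∃ ω : ExteriorAlgebra ℂ V7, ω ∈ ⋀[ℂ]^3 V7 ∧ ω ≠ 0 ∧
    ExteriorAlgebra.map (Matrix.toLin' A) ω = ω ∧
    ExteriorAlgebra.map (Matrix.toLin' B) ω = ω

/-- `J(7)`. -/
def matJ7 : Matrix (Fin 7) (Fin 7) ℂ := bidiag 1 1


abbrev M7 : Type := Matrix (Fin 7) (Fin 7) ℂ

def centA (c : Fin 25 → ℂ) : M7 := Matrix.of fun i j =>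
  if i = 0 then (if j = 0 then c 0 else (if j = 1 then c 1 else (if j = 2 then c 2 else (if j = 3 then c 3 else (if j = 4 then 0 else (if j = 5 then 0 else (0))))))) else (if i = 1 then (if j = 0 then c 4 else (if j = 1 then c 5 else (if j = 2 then c 6 else (if j = 3 then c 7 else (if j = 4 then 0 else (if j = 5 then 0 else (0))))))) else (if i = 2 then (if j = 0 then c 8 else (if j = 1 then c 9 else (if j = 2 then c 10 else (if j = 3 then c 11 else (if j = 4 then 0 else (if j = 5 then 0 else (0))))))) else (if i = 3 then (if j = 0 then c 12 else (if j = 1 then c 13 else (if j = 2 then c 14 else (if j = 3 then c 15 else (if j = 4 then 0 else (if j = 5 then 0 else (0))))))) else (if i = 4 then (if j = 0 then 0 else (if j = 1 then 0 else (if j = 2 then 0 else (if j = 3 then 0 else (if j = 4 then c 16 else (if j = 5 then c 17 else (c 18))))))) else (if i = 5 then (if j = 0 then 0 else (if j = 1 then 0 else (if j = 2 then 0 else (if j = 3 then 0 else (if j = 4 then c 19 else (if j = 5 then c 20 else (c 21))))))) else (if j = 0 then 0 else (if j = 1 then 0 else (if j = 2 then 0 else (if j = 3 then 0 else (if j = 4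 then c 22 else (if j = 5 then c 23 else (c 24))))))))))))

def centB (c : Fin 19 → ℂ) : M7 := Matrix.of fun i j =>
  if i = 0 then (if j = 0 then c 0 else (if j = 1 then c 1 else (if j = 2 then c 2 else (if j = 3 then c 3 else (if j = 4 then 0 else (if j = 5 then c 4 else (c 5))))))) else (if i = 1 then (if j = 0 then 0 else (if j = 1 then c 0 else (if j = 2 then 0 else (if j = 3 then c 2 else (if j = 4 then 0 else (if j = 5 then 0 else (c 4))))))) else (if i = 2 then (if j = 0 then c 6 else (if j = 1 then c 7 else (if j = 2 then c 8 else (if j = 3 then c 9 else (if j = 4 then 0 else (if j = 5 then c 10 else (c 11))))))) else (if i = 3 then (if j = 0 then 0 else (if j = 1 then c 6 else (if j = 2 then 0 else (if j = 3 then c 8 else (if j = 4 then 0 else (if j = 5 then 0 else (c 10))))))) else (if i = 4 then (if j = 0 then c 12 else (if j = 1 then c 13 else (if j = 2 then c 14 else (if j = 3 then c 15 else (if j = 4 then c 16 else (if j = 5 then c 17 else (c 18))))))) else (if i = 5 then (if j = 0 then 0 else (if j = 1 then c 12 else (if j = 2 then 0 else (if j = 3 then c 14 else (if j = 4 then 0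 else (if j = 5 then c 16 else (c 17))))))) else (if j = 0 then 0 else (if j = 1 then 0 else (if j = 2 then 0 else (if j = 3 then 0 else (if j = 4 then 0 else (if j = 5 then 0 else (c 16))))))))))))

def centJ (c : Fin 7 → ℂ) : M7 := Matrix.of fun i j =>
  if i = 0 then (if j = 0 then c 0 else (if j = 1 then c 1 else (if j = 2 then c 2 else (if j = 3 then c 3 else (if j = 4 then c 4 else (if j = 5 then c 5 else (c 6))))))) else (if i = 1 then (if j = 0 then 0 else (if j = 1 then c 0 else (if j = 2 then c 1 else (if j = 3 then c 2 else (if j = 4 then c 3 else (if j = 5 then c 4 else (c 5))))))) else (if i = 2 then (if j = 0 then 0 else (if j = 1 then 0 else (if j = 2 then c 0 else (if j = 3 then c 1 else (if j = 4 then c 2 else (if j = 5 then c 3 else (c 4))))))) else (if i = 3 then (if j = 0 then 0 else (if j = 1 then 0 else (if j = 2 then 0 else (if j = 3 then c 0 else (if j = 4 then c 1 else (if j = 5 then c 2 else (c 3))))))) else (if i = 4 then (if j = 0 then 0 else (if j = 1 then 0 else (if j = 2 then 0 else (if j = 3 then 0 else (if j = 4 then c 0 else (if j = 5 then c 1 else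 (c 2))))))) else (if i = 5 then (if j = 0 then 0 else (if j = 1 then 0 else (if j = 2 then 0 else (if j = 3 then 0 else (if j = 4 then 0 else (if j = 5 then c 0 else (c 1))))))) else (if j = 0 then 0 else (if j = 1 then 0 else (if j = 2 then 0 else (if j = 3 then 0 else (if j = 4 then 0 else (if j = 5 then 0 else (c 0))))))))))))

def matAT : M7 := Matrix.of fun i j =>
  if i = 0 then (if j = 0 then -1 else (if j = 1 then 0 else (if j = 2 then 0 else (if j = 3 then 0 else (if j = 4 then 0 else (if j = 5 then 0 else (0))))))) else (if i = 1 then (if j = 0 then 0 else (if j = 1 then -1 else (if j = 2 then 0 else (if j = 3 then 0 else (if j = 4 then 0 else (if j = 5 then 0 else (0))))))) else (if i = 2 then (if j = 0 then 0 else (if j = 1 then 0 else (if j = 2 then -1 else (if j = 3 then 0 else (if j = 4 then 0 else (if j = 5 then 0 else (0))))))) else (if i = 3 then (if j = 0 then 0 else (if j = 1 then 0 else (if j = 2 then 0 else (if j = 3 then -1 else (if j = 4 then 0 else (if j = 5 then 0 else (0))))))) else (if i = 4 then (if j = 0 then 0 else (if j = 1 then 0 else (if j = 2 then 0 else (if j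 = 3 then 0 else (if j = 4 then 1 else (if j = 5 then 0 else (0))))))) else (if i = 5 then (if j = 0 then 0 else (if j = 1 then 0 else (if j = 2 then 0 else (if j = 3 then 0 else (if j = 4 then 0 else (if j = 5 then 1 else (0))))))) else (if j = 0 then 0 else (if j = 1 then 0 else (if j = 2 then 0 else (if j = 3 then 0 else (if j = 4 then 0 else (if j = 5 then 0 else (1))))))))))))

def matBT : M7 := Matrix.of fun i j =>
  if i = 0 then (if j = 0 then 1 else (if j = 1 then 1 else (if j = 2 then 0 else (if j = 3 then 0 else (if j = 4 then 0 else (if j = 5 then 0 else (0))))))) else (if i = 1 then (if j = 0 then 0 else (if j = 1 then 1 else (if j = 2 then 0 else (if j = 3 then 0 else (if j = 4 then 0 else (if j = 5 then 0 else (0))))))) else (if i = 2 then (if j = 0 then 0 else (if j = 1 then 0 else (if j = 2 then 1 else (if j = 3 then 1 else (if j = 4 then 0 else (if j = 5 then 0 else (0))))))) else (if i = 3 then (if j = 0 then 0 else (if j = 1 then 0 else (if j = 2 then 0 else (if j = 3 then 1 else (if j = 4 then 0 else (if j = 5 then 0 else (0))))))) else (if i = 4 then (if j = 0 then 0 else (if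 j = 1 then 0 else (if j = 2 then 0 else (if j = 3 then 0 else (if j = 4 then 1 else (if j = 5 then 1 else (0))))))) else (if i = 5 then (if j = 0 then 0 else (if j = 1 then 0 else (if j = 2 then 0 else (if j = 3 then 0 else (if j = 4 then 0 else (if j = 5 then 1 else (1))))))) else (if j = 0 then 0 else (if j = 1 then 0 else (if j = 2 then 0 else (if j = 3 then 0 else (if j = 4 then 0 else (if j = 5 then 0 else (1))))))))))))

def matJT : M7 := Matrix.of fun i j =>
  if i = 0 then (if j = 0 then 1 else (if j = 1 then 1 else (if j = 2 then 0 else (if j = 3 then 0 else (if j = 4 then 0 else (if j = 5 then 0 else (0))))))) else (if i = 1 then (if j = 0 then 0 else (if j = 1 then 1 else (if j = 2 then 1 else (if j = 3 then 0 else (if j = 4 then 0 else (if j = 5 then 0 else (0))))))) else (if i = 2 then (if j = 0 then 0 else (if j = 1 then 0 else (if j = 2 then 1 else (if j = 3 then 1 else (if j = 4 then 0 else (if j = 5 then 0 else (0))))))) else (if i = 3 then (if j = 0 then 0 else (if j = 1 then 0 else (if j = 2 then 0 else (if j = 3 then 1 else (if j = 4 then 1 else (if j = 5 then 0 else (0)))))))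 else (if i = 4 then (if j = 0 then 0 else (if j = 1 then 0 else (if j = 2 then 0 else (if j = 3 then 0 else (if j = 4 then 1 else (if j = 5 then 1 else (0))))))) else (if i = 5 then (if j = 0 then 0 else (if j = 1 then 0 else (if j = 2 then 0 else (if j = 3 then 0 else (if j = 4 then 0 else (if j = 5 then 1 else (1))))))) else (if j = 0 then 0 else (if j = 1 then 0 else (if j = 2 then 0 else (if j = 3 then 0 else (if j = 4 then 0 else (if j = 5 then 0 else (1))))))))))))

lemma matA_eqT : matA = matAT := by
  ext i j; fin_cases i <;> fin_cases j <;> rfl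

lemma matB_eqT : matB = matBT := by
  ext i j; fin_cases i <;> fin_cases j <;> rfl

lemma matJ_eqT : matJ7 = matJT := by
  ext i j; fin_cases i <;> fin_cases j <;> rfl

set_option maxHeartbeats 2000000 in
lemma centA_comm (c) : centA c * matA = matA * centA c := by
  rw [matA_eqT]
  ext i j
  fin_cases i <;> fin_cases j <;>
    · simp [centA, matAT, Matrix.mul_apply, Fin.sum_univ_seven]
      try ring

set_option maxHeartbeats 2000000 in
lemma centB_comm (c) : centB c * matB = matB * centB c := by
  rw [matB_eqT]
  ext i j
  fin_cases i <;> fin_cases j <;>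
    · simp [centB, matBT, Matrix.mul_apply, Fin.sum_univ_seven]
      try ring

set_option maxHeartbeats 2000000 in
lemma centJ_comm (c) : centJ c * matJ7 = matJ7 * centJ c := by
  rw [matJ_eqT]
  ext i j
  fin_cases i <;> fin_cases j <;>
    · simp [centJ, matJT, Matrix.mul_apply, Fin.sum_univ_seven]
      try ring

set_option maxHeartbeats 2000000 in
def centAL : (Fin 25 → ℂ) →ₗ[ℂ] M7 where
  toFun := centA
  map_add' x y := by
    ext i j; fin_cases i <;> fin_cases j <;> simp [centA]
  map_smul' r x := by
    ext i j; fin_cases i <;> fin_cases j <;> simp [centA]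

set_option maxHeartbeats 2000000 in
def centBL : (Fin 19 → ℂ) →ₗ[ℂ] M7 where
  toFun := centB
  map_add' x y := by
    ext i j; fin_cases i <;> fin_cases j <;> simp [centB]
  map_smul' r x := by
    ext i j; fin_cases i <;> fin_cases j <;> simp [centB]

set_option maxHeartbeats 2000000 in
def centJL : (Fin 7 → ℂ) →ₗ[ℂ] M7 where
  toFun := centJ
  map_add' x y := by
    ext i j; fin_cases i <;> fin_cases j <;> simp [centJ]
  map_smul' r x := by
    ext i j; fin_cases i <;> fin_cases j <;> simp [centJ]

set_option maxHeartbeats 2000000 in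
lemma centA_zero (c : Fin 25 → ℂ) (h : centA c = 0) : c = 0 := by
  have e : ∀ (i j : Fin 7), centA c i j = 0 := fun i j => by rw [h]; simp
  funext k
  fin_cases k
  · simpa [centA] using e 0 0
  · simpa [centA] using e 0 1
  · simpa [centA] using e 0 2
  · simpa [centA] using e 0 3
  · simpa [centA] using e 1 0
  · simpa [centA] using e 1 1
  · simpa [centA] using e 1 2
  · simpa [centA] using e 1 3
  · simpa [centA] using e 2 0
  · simpa [centA] using e 2 1
  · simpa [centA] using e 2 2
  · simpa [centA] using e 2 3
  · simpa [centA] using e 3 0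
  · simpa [centA] using e 3 1
  · simpa [centA] using e 3 2
  · simpa [centA] using e 3 3
  · simpa [centA] using e 4 4
  · simpa [centA] using e 4 5
  · simpa [centA] using e 4 6
  · simpa [centA] using e 5 4
  · simpa [centA] using e 5 5
  · simpa [centA] using e 5 6
  · simpa [centA] using e 6 4
  · simpa [centA] using e 6 5
  · simpa [centA] using e 6 6

set_option maxHeartbeats 2000000 in
lemma centB_zero (c : Fin 19 → ℂ) (h : centB c = 0) : c = 0 := by
  have e : ∀ (i j : Fin 7), centB c i j = 0 := fun i j => by rw [h]; simp
  funext k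
  fin_cases k
  · simpa [centB] using e 0 0
  · simpa [centB] using e 0 1
  · simpa [centB] using e 0 2
  · simpa [centB] using e 0 3
  · simpa [centB] using e 0 5
  · simpa [centB] using e 0 6
  · simpa [centB] using e 2 0
  · simpa [centB] using e 2 1
  · simpa [centB] using e 2 2
  · simpa [centB] using e 2 3
  · simpa [centB] using e 2 5
  · simpa [centB] using e 2 6
  · simpa [centB] using e 4 0
  · simpa [centB] using e 4 1
  · simpa [centB] using e 4 2
  · simpa [centB] using e 4 3
  · simpa [centB] using e 4 4
  · simpa [centB] using e 4 5
  · simpa [centB] using e 4 6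

set_option maxHeartbeats 2000000 in
lemma centJ_zero (c : Fin 7 → ℂ) (h : centJ c = 0) : c = 0 := by
  have e : ∀ (i j : Fin 7), centJ c i j = 0 := fun i j => by rw [h]; simp
  funext k
  fin_cases k
  · simpa [centJ] using e 0 0
  · simpa [centJ] using e 0 1
  · simpa [centJ] using e 0 2
  · simpa [centJ] using e 0 3
  · simpa [centJ] using e 0 4
  · simpa [centJ] using e 0 5
  · simpa [centJ] using e 0 6

lemma centAL_inj : Function.Injective (centAL) := by
  intro x y hxy
  have h : centAL (x - y) = 0 := by rw [map_sub, hxy, sub_self]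
  have := centA_zero _ h
  exact sub_eq_zero.mp this

lemma centBL_inj : Function.Injective (centBL) := by
  intro x y hxy
  have h : centBL (x - y) = 0 := by rw [map_sub, hxy, sub_self]
  have := centB_zero _ h
  exact sub_eq_zero.mp this

lemma centJL_inj : Function.Injective (centJL) := by
  intro x y hxy
  have h : centJL (x - y) = 0 := by rw [map_sub, hxy, sub_self]
  have := centJ_zero _ h
  exact sub_eq_zero.mp this


open Module LinearMap in
lemma m7_finrank : Module.finrank ℂ M7 = 49 := by
  rw [Module.finrank_matrix]; simp

/-- conjugation-type linear map `X ↦ P * X * Q⁻¹`. -/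
def cconj (P Q : GL (Fin 7) ℂ) : M7 →ₗ[ℂ] M7 :=
  (LinearMap.mulLeft ℂ (P : M7)).comp (LinearMap.mulRight ℂ ((Q⁻¹ : GL (Fin 7) ℂ) : M7))

lemma cconj_apply (P Q : GL (Fin 7) ℂ) (X : M7) :
    cconj P Q X = (P : M7) * X * ((Q⁻¹ : GL (Fin 7) ℂ) : M7) := by
  simp [cconj, mul_assoc]

lemma trace_mul_single (M : M7) (i j : Fin 7) :
    Matrix.trace (M * Matrix.single j i (1:ℂ)) = M i j := by
  classical
  have key : ∀ k : Fin 7, (M * Matrix.single j i (1:ℂ)) k k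
      = if k = i then M k j else 0 := by
    intro k
    by_cases hk : k = i
    · subst hk; simp
    · simp [Matrix.mul_single_apply_of_ne, hk]
  rw [Matrix.trace]
  simp only [Matrix.diag_apply, key]
  simp

lemma tr_ext (M N : M7) (h : ∀ Z : M7, Matrix.trace (M * Z) = Matrix.trace (N * Z)) :
    M = N := by
  ext i j
  have := h (Matrix.single j i 1)
  rwa [trace_mul_single, trace_mul_single] at this

lemma dual_repr (φ : Module.Dual ℂ M7) (Mx : M7) :
    φ Mx = Matrix.trace ((Matrix.of fun p k => φ (Matrix.single k p (1:ℂ))) * Mx) := by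
  classical
  conv_lhs => rw [Matrix.matrix_eq_sum_single Mx]
  rw [map_sum]
  have e1 : ∀ (i j : Fin 7), φ (Matrix.single i j (Mx i j))
      = Mx i j * φ (Matrix.single i j (1:ℂ)) := by
    intro i j
    have : Matrix.single i j (Mx i j) = (Mx i j) • Matrix.single i j (1:ℂ) := by
      rw [Matrix.smul_single]; simp
    rw [this, _root_.map_smul, smul_eq_mul]
  rw [Matrix.trace]
  simp only [map_sum, e1, Matrix.diag_apply, Matrix.mul_apply, Matrix.of_apply]
  rw [Finset.sum_comm]
  refine Finset.sum_congr rfl fun i _ => Finset.sum_congr rfl fun j _ => ?_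
  ring

lemma isUnit_of_intertwine (Y M₁ M₂ N₁ N₂ : M7) (hirr : IrredPair N₁ N₂)
    (h1 : M₁ * Y = Y * N₁) (h2 : M₂ * Y = Y * N₂) (hY : Y ≠ 0) : IsUnit Y := by
  classical
  set Wk : Submodule ℂ V7 := LinearMap.ker (Matrix.mulVecLin Y) with hWk
  have inv1 : ∀ v ∈ Wk, N₁.mulVec v ∈ Wk := by
    intro v hv
    simp only [hWk, LinearMap.mem_ker, Matrix.mulVecLin_apply] at hv ⊢
    rw [Matrix.mulVec_mulVec, ← h1, ← Matrix.mulVec_mulVec, hv, Matrix.mulVec_zero]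
  have inv2 : ∀ v ∈ Wk, N₂.mulVec v ∈ Wk := by
    intro v hv
    simp only [hWk, LinearMap.mem_ker, Matrix.mulVecLin_apply] at hv ⊢
    rw [Matrix.mulVec_mulVec, ← h2, ← Matrix.mulVec_mulVec, hv, Matrix.mulVec_zero]
  rcases hirr Wk inv1 inv2 with h | h
  · rw [← Matrix.mulVec_injective_iff_isUnit]
    have : Function.Injective (Matrix.mulVecLin Y) := LinearMap.ker_eq_bot.mp h
    exact this
  · exfalso
    apply hY
    ext i j
    have hv : Y.mulVec (Pi.single j 1) = 0 := by
      have : (Pi.single j 1 : V7) ∈ Wk := h.symm ▸ Submodule.mem_top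
      simpa [hWk, Matrix.mulVecLin_apply] using this
    have := congrFun hv i
    simpa [Matrix.mulVec_single] using this

set_option maxHeartbeats 1000000 in
lemma ker_lower {n : ℕ} (P P' : GL (Fin 7) ℂ) (M : M7)
    (hP : IsConjTo (P : Matrix (Fin 7) (Fin 7) ℂ) M)
    (hP' : IsConjTo (P' : Matrix (Fin 7) (Fin 7) ℂ) M)
    (ι : (Fin n → ℂ) →ₗ[ℂ] M7) (hcomm : ∀ c, ι c * M = M * ι c)
    (hinj : Function.Injective ι) :
    n ≤ Module.finrank ℂ (LinearMap.ker (cconj P' P - LinearMap.id)) := by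
  classical
  obtain ⟨g, hg⟩ := hP
  obtain ⟨g', hg'⟩ := hP'
  set gm : M7 := (g : M7) with hgm
  set gi : M7 := ((g⁻¹ : GL (Fin 7) ℂ) : M7) with hgi
  set g'm : M7 := (g' : M7) with hg'm
  set g'i : M7 := ((g'⁻¹ : GL (Fin 7) ℂ) : M7) with hg'i
  set pm : M7 := (P : M7) with hpm
  set pv : M7 := ((P⁻¹ : GL (Fin 7) ℂ) : M7) with hpv
  set p'm : M7 := (P' : M7) with hp'm
  have e1 : gi * gm = 1 := Units.inv_mul g
  have e2 : gm * gi = 1 := Units.mul_inv g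
  have e3 : g'i * g'm = 1 := Units.inv_mul g'
  have e4 : pm * pv = 1 := Units.mul_inv P
  set κ : (Fin n → ℂ) →ₗ[ℂ] M7 :=
    (LinearMap.mulLeft ℂ g'm).comp ((LinearMap.mulRight ℂ gi).comp ι) with hκdef
  have hκ_apply : ∀ c, κ c = g'm * (ι c * gi) := by
    intro c; simp [hκdef]
  have hP'g : p'm * g'm = g'm * M := by
    calc p'm * g'm = (g'm * M * g'i) * g'm := by rw [hg']
      _ = g'm * M * (g'i * g'm) := by noncomm_ring
      _ = g'm * M := by rw [e3, mul_one]
  have hMg : M * gi = gi * pm := by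
    calc M * gi = (gi * gm) * (M * gi) := by rw [e1, one_mul]
      _ = gi * (gm * M * gi) := by noncomm_ring
      _ = gi * pm := by rw [hg]
  have hmem : ∀ c, κ c ∈ LinearMap.ker (cconj P' P - LinearMap.id) := by
    intro c
    simp only [LinearMap.mem_ker, LinearMap.sub_apply, LinearMap.id_apply, sub_eq_zero, cconj,
      LinearMap.comp_apply, LinearMap.mulLeft_apply, LinearMap.mulRight_apply, hκ_apply,
      ← hpm, ← hpv, ← hp'm]
    calc p'm * (g'm * (ι c * gi) * pv)
        = (p'm * g'm) * ((ι c * gi) * pv) := by noncomm_ring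
      _ = (g'm * M) * ((ι c * gi) * pv) := by rw [hP'g]
      _ = g'm * ((M * ι c) * (gi * pv)) := by noncomm_ring
      _ = g'm * ((ι c * M) * (gi * pv)) := by rw [hcomm]
      _ = g'm * (ι c * ((M * gi) * pv)) := by noncomm_ring
      _ = g'm * (ι c * ((gi * pm) * pv)) := by rw [hMg]
      _ = g'm * (ι c * (gi * (pm * pv))) := by noncomm_ring
      _ = g'm * (ι c * gi) := by rw [e4, mul_one]
  have hκinj : Function.Injective κ := by
    intro x y hxy
    apply hinj
    have cancel : ∀ c, g'i * κ c * gm = ι c := by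
      intro c
      calc g'i * κ c * gm = g'i * (g'm * (ι c * gi)) * gm := by rw [hκ_apply]
        _ = (g'i * g'm) * ι c * (gi * gm) := by noncomm_ring
        _ = ι c := by rw [e1, e3, one_mul, mul_one]
    rw [← cancel x, ← cancel y, hxy]
  have hfd : Module.finrank ℂ (Fin n → ℂ) = n := by simp
  calc n = Module.finrank ℂ (Fin n → ℂ) := hfd.symm
    _ ≤ Module.finrank ℂ (LinearMap.ker (cconj P' P - LinearMap.id)) := by
        apply LinearMap.finrank_le_finrank_of_injective
          (f := κ.codRestrict (LinearMap.ker (cconj P' P - LinearMap.id)) hmem)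
        intro x y hxy
        apply hκinj
        simpa [LinearMap.codRestrict, Subtype.ext_iff] using hxy

set_option maxHeartbeats 2000000 in
lemma exists_reverse (A B A' B' : GL (Fin 7) ℂ)
    (hA : IsConjTo (A : Matrix (Fin 7) (Fin 7) ℂ) matA)
    (hA' : IsConjTo (A' : Matrix (Fin 7) (Fin 7) ℂ) matA)
    (hB : IsConjTo (B : Matrix (Fin 7) (Fin 7) ℂ) matB)
    (hB' : IsConjTo (B' : Matrix (Fin 7) (Fin 7) ℂ) matB)
    (hAB : IsConjTo (((A * B)⁻¹ : GL (Fin 7) ℂ) : Matrix (Fin 7) (Fin 7) ℂ) matJ7)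
    (hAB' : IsConjTo (((A' * B')⁻¹ : GL (Fin 7) ℂ) : Matrix (Fin 7) (Fin 7) ℂ) matJ7)
    (hzero : ∀ X : M7, (A' : M7) * X = X * (A : M7) → (B' : M7) * X = X * (B : M7) → X = 0) :
    ∃ Y : M7, Y ≠ 0 ∧ Y * (A' : M7) = (A : M7) * Y ∧ Y * (B' : M7) = (B : M7) * Y := by
  classical
  set u : M7 →ₗ[ℂ] M7 := cconj A' A with hu
  set v : M7 →ₗ[ℂ] M7 := cconj B' B with hv
  set w : M7 →ₗ[ℂ] M7 := cconj (A' * B')⁻¹ (A * B)⁻¹ with hw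
  have u_apply : ∀ x : M7, u x = (A' : M7) * (x * ((A⁻¹ : GL (Fin 7) ℂ) : M7)) := by
    intro x; simp [hu, cconj]
  have v_apply : ∀ x : M7, v x = (B' : M7) * (x * ((B⁻¹ : GL (Fin 7) ℂ) : M7)) := by
    intro x; simp [hv, cconj]
  have w_apply : ∀ x : M7, w x
      = (((A' * B')⁻¹ : GL (Fin 7) ℂ) : M7) * (x * (((A * B) : GL (Fin 7) ℂ) : M7)) := by
    intro x; simp [hw, cconj, mul_assoc]
  have c1 : (A' : M7) * (B' : M7) * (((A' * B')⁻¹ : GL (Fin 7) ℂ) : M7) = 1 := by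
    rw [← Units.val_mul, Units.mul_inv]
  have c2 : (((A * B) : GL (Fin 7) ℂ) : M7) * ((B⁻¹ : GL (Fin 7) ℂ) : M7)
      * ((A⁻¹ : GL (Fin 7) ℂ) : M7) = 1 := by
    rw [Units.val_mul, mul_assoc ((A : M7)) ((B : M7)) _, Units.mul_inv, mul_one, Units.mul_inv]
  have huvw : ∀ x : M7, u (v (w x)) = x := by
    intro x
    rw [w_apply, v_apply, u_apply]
    calc (A' : M7) * (((B' : M7) * (((((A' * B')⁻¹ : GL (Fin 7) ℂ) : M7)
            * (x * (((A * B) : GL (Fin 7) ℂ) : M7))) * ((B⁻¹ : GL (Fin 7) ℂ) : M7)))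
            * ((A⁻¹ : GL (Fin 7) ℂ) : M7))
        = ((A' : M7) * (B' : M7) * (((A' * B')⁻¹ : GL (Fin 7) ℂ) : M7)) * x
            * ((((A * B) : GL (Fin 7) ℂ) : M7) * ((B⁻¹ : GL (Fin 7) ℂ) : M7)
              * ((A⁻¹ : GL (Fin 7) ℂ) : M7)) := by noncomm_ring
      _ = x := by rw [c1, c2, one_mul, mul_one]
  have hAx_of_u : ∀ x : M7, u x = x → (A' : M7) * x = x * (A : M7) := by
    intro x hx
    have hfix : (A' : M7) * (x * ((A⁻¹ : GL (Fin 7) ℂ) : M7)) = x := by rw [← u_apply, hx]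
    have step : (A' : M7) * ((x * ((A⁻¹ : GL (Fin 7) ℂ) : M7)) * (A : M7)) = (A' : M7) * x := by
      rw [mul_assoc x, Units.inv_mul, mul_one]
    calc (A' : M7) * x
        = (A' : M7) * (x * ((A⁻¹ : GL (Fin 7) ℂ) : M7)) * (A : M7) := by
          rw [← mul_assoc] at step; rw [← step]
      _ = x * (A : M7) := by rw [hfix]
  have hBx_of_v : ∀ x : M7, v x = x → (B' : M7) * x = x * (B : M7) := by
    intro x hx
    have hfix : (B' : M7) * (x * ((B⁻¹ : GL (Fin 7) ℂ) : M7)) = x := by rw [← v_apply, hx]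
    have step : (B' : M7) * ((x * ((B⁻¹ : GL (Fin 7) ℂ) : M7)) * (B : M7)) = (B' : M7) * x := by
      rw [mul_assoc x, Units.inv_mul, mul_one]
    calc (B' : M7) * x
        = (B' : M7) * (x * ((B⁻¹ : GL (Fin 7) ℂ) : M7)) * (B : M7) := by
          rw [← mul_assoc] at step; rw [← step]
      _ = x * (B : M7) := by rw [hfix]
  -- the three kernels
  set K1 : Submodule ℂ M7 := LinearMap.ker (u - LinearMap.id) with hK1def
  set K2 : Submodule ℂ M7 := LinearMap.ker (v - LinearMap.id) with hK2def
  set K3 : Submodule ℂ M7 := LinearMap.ker (w - LinearMap.id) with hK3def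
  have hK1 : 25 ≤ Module.finrank ℂ K1 :=
    ker_lower A A' matA hA hA' centAL (fun c => centA_comm c) centAL_inj
  have hK2 : 19 ≤ Module.finrank ℂ K2 :=
    ker_lower B B' matB hB hB' centBL (fun c => centB_comm c) centBL_inj
  have hK3 : 7 ≤ Module.finrank ℂ K3 :=
    ker_lower (A * B)⁻¹ (A' * B')⁻¹ matJ7 hAB hAB' centJL (fun c => centJ_comm c) centJL_inj
  -- the telescoping map T
  set T : (M7 × (M7 × M7)) →ₗ[ℂ] M7 :=
    ((u - LinearMap.id).comp (LinearMap.fst ℂ M7 (M7 × M7))) +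
    ((u.comp (v - LinearMap.id)).comp
      ((LinearMap.fst ℂ M7 M7).comp (LinearMap.snd ℂ M7 (M7 × M7)))) +
    (((u.comp v).comp (w - LinearMap.id)).comp
      ((LinearMap.snd ℂ M7 M7).comp (LinearMap.snd ℂ M7 (M7 × M7)))) with hT
  have T_apply : ∀ x y z : M7,
      T (x, (y, z)) = (u x - x) + u (v y - y) + u (v (w z - z)) := by
    intro x y z
    simp [hT, LinearMap.sub_apply]
  have hK1mem : ∀ a : ↥K1, u ↑a = (↑a : M7) := by
    intro a
    have h2 : (↑a : M7) ∈ LinearMap.ker (u - LinearMap.id) := a.2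
    rw [LinearMap.mem_ker, LinearMap.sub_apply, LinearMap.id_apply, sub_eq_zero] at h2
    exact h2
  have hK2mem : ∀ a : ↥K2, v ↑a = (↑a : M7) := by
    intro a
    have h2 : (↑a : M7) ∈ LinearMap.ker (v - LinearMap.id) := a.2
    rw [LinearMap.mem_ker, LinearMap.sub_apply, LinearMap.id_apply, sub_eq_zero] at h2
    exact h2
  have hK3mem : ∀ a : ↥K3, w ↑a = (↑a : M7) := by
    intro a
    have h2 : (↑a : M7) ∈ LinearMap.ker (w - LinearMap.id) := a.2
    rw [LinearMap.mem_ker, LinearMap.sub_apply, LinearMap.id_apply, sub_eq_zero] at h2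
    exact h2
  -- the comparison map μ
  set qK : (M7 × (↥K1 × (↥K2 × ↥K3))) →ₗ[ℂ] (↥K1 × (↥K2 × ↥K3)) :=
    LinearMap.snd ℂ M7 (↥K1 × (↥K2 × ↥K3)) with hqK
  set q0 : (M7 × (↥K1 × (↥K2 × ↥K3))) →ₗ[ℂ] M7 :=
    LinearMap.fst ℂ M7 (↥K1 × (↥K2 × ↥K3)) with hq0
  set q1 : (M7 × (↥K1 × (↥K2 × ↥K3))) →ₗ[ℂ] M7 :=
    K1.subtype.comp ((LinearMap.fst ℂ ↥K1 (↥K2 × ↥K3)).comp qK) with hq1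
  set q2 : (M7 × (↥K1 × (↥K2 × ↥K3))) →ₗ[ℂ] M7 :=
    K2.subtype.comp ((LinearMap.fst ℂ ↥K2 ↥K3).comp
      ((LinearMap.snd ℂ ↥K1 (↥K2 × ↥K3)).comp qK)) with hq2
  set q3 : (M7 × (↥K1 × (↥K2 × ↥K3))) →ₗ[ℂ] M7 :=
    K3.subtype.comp ((LinearMap.snd ℂ ↥K2 ↥K3).comp
      ((LinearMap.snd ℂ ↥K1 (↥K2 × ↥K3)).comp qK)) with hq3
  set μ : (M7 × (↥K1 × (↥K2 × ↥K3))) →ₗ[ℂ] (M7 × (M7 × M7)) :=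
    (q0 + q1).prod ((q0 + q2).prod (q0 + q3)) with hμ
  have μ_apply : ∀ (x : M7) (a : ↥K1) (b : ↥K2) (c : ↥K3),
      μ (x, (a, (b, c))) = (x + ↑a, (x + ↑b, x + ↑c)) := by
    intro x a b c
    simp [hμ, hq0, hq1, hq2, hq3, hqK]
  have hμmem : ∀ m, μ m ∈ LinearMap.ker T := by
    rintro ⟨x, a, b, c⟩
    rw [LinearMap.mem_ker, μ_apply, T_apply]
    have e1 : u (x + ↑a) - (x + ↑a) = u x - x := by rw [map_add, hK1mem]; abel
    have e2 : v (x + ↑b) - (x + ↑b) = v x - x := by rw [map_add, hK2mem]; abel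
    have e3 : w (x + ↑c) - (x + ↑c) = w x - x := by rw [map_add, hK3mem]; abel
    rw [e1, e2, e3]
    simp only [map_sub]
    rw [huvw x]
    abel
  have hμinj : Function.Injective μ := by
    rw [← LinearMap.ker_eq_bot]
    rw [Submodule.eq_bot_iff]
    rintro ⟨x, a, b, c⟩ hm
    rw [LinearMap.mem_ker, μ_apply] at hm
    have h1 : x + (↑a : M7) = 0 := congrArg Prod.fst hm
    have h2 : x + (↑b : M7) = 0 := congrArg Prod.fst (congrArg Prod.snd hm)
    have h3 : x + (↑c : M7) = 0 := congrArg Prod.snd (congrArg Prod.snd hm)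
    have ha : (↑a : M7) = -x := eq_neg_of_add_eq_zero_right h1
    have hb : (↑b : M7) = -x := eq_neg_of_add_eq_zero_right h2
    have hc : (↑c : M7) = -x := eq_neg_of_add_eq_zero_right h3
    have hux : u x = x := by
      have := hK1mem a
      rw [ha, map_neg] at this
      exact neg_injective this
    have hvx : v x = x := by
      have := hK2mem b
      rw [hb, map_neg] at this
      exact neg_injective this
    have hx0 : x = 0 := hzero x (hAx_of_u x hux) (hBx_of_v x hvx)
    have ha0 : a = 0 := Subtype.ext (by rw [ha, hx0, neg_zero]; rfl)
    have hb0 : b = 0 := Subtype.ext (by rw [hb, hx0, neg_zero]; rfl)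
    have hc0 : c = 0 := Subtype.ext (by rw [hc, hx0, neg_zero]; rfl)
    rw [hx0, ha0, hb0, hc0]
    rfl
  -- dimension count
  have hdom100 : (100 : ℕ) ≤ Module.finrank ℂ (M7 × (↥K1 × (↥K2 × ↥K3))) := by
    rw [Module.finrank_prod, Module.finrank_prod, Module.finrank_prod, m7_finrank]
    omega
  have hker100 : (100 : ℕ) ≤ Module.finrank ℂ (LinearMap.ker T) := by
    refine le_trans hdom100 ?_
    apply LinearMap.finrank_le_finrank_of_injective
      (f := μ.codRestrict (LinearMap.ker T) hμmem)
    intro x y hxy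
    apply hμinj
    simpa [LinearMap.codRestrict, Subtype.ext_iff] using hxy
  have hRN := LinearMap.finrank_range_add_finrank_ker T
  have hdom147 : Module.finrank ℂ (M7 × (M7 × M7)) = 147 := by
    rw [Module.finrank_prod, Module.finrank_prod, m7_finrank]
  rw [hdom147] at hRN
  have hrange : Module.finrank ℂ (LinearMap.range T) ≤ 47 := by omega
  have hquot : 0 < Module.finrank ℂ (M7 ⧸ (LinearMap.range T)) := by
    have hq := Submodule.finrank_quotient_add_finrank (LinearMap.range T)
    rw [m7_finrank] at hq
    omega
  have hann_rank : 0 < Module.finrank ℂ ((LinearMap.range T).dualAnnihilator) := by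
    rw [← LinearEquiv.finrank_eq (Subspace.quotEquivAnnihilator (LinearMap.range T))]
    exact hquot
  have hannne : (LinearMap.range T).dualAnnihilator ≠ ⊥ := by
    intro h
    rw [h] at hann_rank
    simp at hann_rank
  obtain ⟨φ, hφmem, hφne⟩ := Submodule.exists_mem_ne_zero_of_ne_bot hannne
  have hann := (Submodule.mem_dualAnnihilator φ).mp hφmem
  have hφu : ∀ x, φ (u x) = φ x := by
    intro x
    have hmem0 : u x - x ∈ LinearMap.range T := by
      refine ⟨(x, (0, 0)), ?_⟩
      rw [T_apply]
      simp
    have h0 := hann _ hmem0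
    rw [map_sub] at h0
    exact sub_eq_zero.mp h0
  have hφv : ∀ x, φ (v x) = φ x := by
    intro x
    have hmem0 : u (v x - x) ∈ LinearMap.range T := by
      refine ⟨(0, (x, 0)), ?_⟩
      rw [T_apply]
      simp
    have h0 := hann _ hmem0
    rw [hφu, map_sub] at h0
    exact sub_eq_zero.mp h0
  have relA : ∀ Z : M7, φ ((A' : M7) * Z) = φ (Z * (A : M7)) := by
    intro Z
    have h1 : u (Z * (A : M7)) = (A' : M7) * Z := by
      rw [u_apply, mul_assoc Z, Units.mul_inv, mul_one]
    have := hφu (Z * (A : M7))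
    rw [h1] at this
    exact this
  have relB : ∀ Z : M7, φ ((B' : M7) * Z) = φ (Z * (B : M7)) := by
    intro Z
    have h1 : v (Z * (B : M7)) = (B' : M7) * Z := by
      rw [v_apply, mul_assoc Z, Units.mul_inv, mul_one]
    have := hφv (Z * (B : M7))
    rw [h1] at this
    exact this
  set Y : M7 := Matrix.of fun p k => φ (Matrix.single k p (1:ℂ)) with hYdef
  have hrepr : ∀ Mx : M7, φ Mx = Matrix.trace (Y * Mx) := fun Mx => dual_repr φ Mx
  have hYne : Y ≠ 0 := by
    intro h0
    apply hφne
    apply LinearMap.ext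
    intro Mx
    rw [LinearMap.zero_apply, hrepr Mx, h0, zero_mul, Matrix.trace_zero]
  have hYA : Y * (A' : M7) = (A : M7) * Y := by
    apply tr_ext
    intro Z
    calc Matrix.trace (Y * (A' : M7) * Z)
        = Matrix.trace (Y * ((A' : M7) * Z)) := by rw [mul_assoc]
      _ = φ ((A' : M7) * Z) := (hrepr _).symm
      _ = φ (Z * (A : M7)) := relA Z
      _ = Matrix.trace (Y * (Z * (A : M7))) := hrepr _
      _ = Matrix.trace ((Y * Z) * (A : M7)) := by rw [mul_assoc]
      _ = Matrix.trace ((A : M7) * (Y * Z)) := Matrix.trace_mul_comm _ _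
      _ = Matrix.trace ((A : M7) * Y * Z) := by rw [mul_assoc]
  have hYB : Y * (B' : M7) = (B : M7) * Y := by
    apply tr_ext
    intro Z
    calc Matrix.trace (Y * (B' : M7) * Z)
        = Matrix.trace (Y * ((B' : M7) * Z)) := by rw [mul_assoc]
      _ = φ ((B' : M7) * Z) := (hrepr _).symm
      _ = φ (Z * (B : M7)) := relB Z
      _ = Matrix.trace (Y * (Z * (B : M7))) := hrepr _
      _ = Matrix.trace ((Y * Z) * (B : M7)) := by rw [mul_assoc]
      _ = Matrix.trace ((B : M7) * (Y * Z)) := Matrix.trace_mul_comm _ _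
      _ = Matrix.trace ((B : M7) * Y * Z) := by rw [mul_assoc]
  exact ⟨Y, hYne, hYA, hYB⟩


theorem g2_triple_rigidity
    (A B A' B' : GL (Fin 7) ℂ)
    (hA : IsConjTo (A : Matrix (Fin 7) (Fin 7) ℂ) matA)
    (hA' : IsConjTo (A' : Matrix (Fin 7) (Fin 7) ℂ) matA)
    (hB : IsConjTo (B : Matrix (Fin 7) (Fin 7) ℂ) matB)
    (hB' : IsConjTo (B' : Matrix (Fin 7) (Fin 7) ℂ) matB)
    (hAB : IsConjTo (((A * B)⁻¹ : GL (Fin 7) ℂ) : Matrix (Fin 7) (Fin 7) ℂ) matJ7)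
    (hAB' : IsConjTo (((A' * B')⁻¹ : GL (Fin 7) ℂ) : Matrix (Fin 7) (Fin 7) ℂ) matJ7)
    (hirr : IrredPair (A : Matrix (Fin 7) (Fin 7) ℂ) (B : Matrix (Fin 7) (Fin 7) ℂ))
    (hirr' : IrredPair (A' : Matrix (Fin 7) (Fin 7) ℂ) (B' : Matrix (Fin 7) (Fin 7) ℂ)) :
    ∃ g : GL (Fin 7) ℂ, A' = g * A * g⁻¹ ∧ B' = g * B * g⁻¹ := by
  classical
  by_cases hX : ∃ X : M7,
      X ≠ 0 ∧ (A' : M7) * X = X * (A : M7) ∧ (B' : M7) * X = X * (B : M7)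
  · obtain ⟨X, hXne, h1, h2⟩ := hX
    have hXu : IsUnit X := isUnit_of_intertwine X (A' : M7) (B' : M7) (A : M7) (B : M7)
      hirr h1 h2 hXne
    obtain ⟨xu, hxu⟩ := hXu
    have hglA : A' * xu = xu * A := by
      apply Units.ext
      rw [Units.val_mul, Units.val_mul, hxu]
      exact h1
    have hglB : B' * xu = xu * B := by
      apply Units.ext
      rw [Units.val_mul, Units.val_mul, hxu]
      exact h2
    refine ⟨xu, ?_, ?_⟩
    · calc A' = A' * xu * xu⁻¹ := by rw [mul_inv_cancel_right]
        _ = xu * A * xu⁻¹ := by rw [hglA]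
    · calc B' = B' * xu * xu⁻¹ := by rw [mul_inv_cancel_right]
        _ = xu * B * xu⁻¹ := by rw [hglB]
  · push_neg at hX
    have hzero : ∀ X : M7,
        (A' : M7) * X = X * (A : M7) → (B' : M7) * X = X * (B : M7) → X = 0 := by
      intro X hX1 hX2
      by_contra hne
      exact (hX X hne hX1) hX2
    obtain ⟨Y, hYne, hYA, hYB⟩ := exists_reverse A B A' B' hA hA' hB hB' hAB hAB' hzero
    have hYu : IsUnit Y := isUnit_of_intertwine Y (A : M7) (B : M7) (A' : M7) (B' : M7)
      hirr' hYA.symm hYB.symm hYne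
    obtain ⟨yu, hyu⟩ := hYu
    have hglA : yu * A' = A * yu := by
      apply Units.ext
      rw [Units.val_mul, Units.val_mul, hyu]
      exact hYA
    have hglB : yu * B' = B * yu := by
      apply Units.ext
      rw [Units.val_mul, Units.val_mul, hyu]
      exact hYB
    refine ⟨yu⁻¹, ?_, ?_⟩
    · calc A' = yu⁻¹ * (yu * A') := by rw [inv_mul_cancel_left]
        _ = yu⁻¹ * (A * yu) := by rw [hglA]
        _ = yu⁻¹ * A * (yu⁻¹)⁻¹ := by rw [inv_inv, mul_assoc]
    · calc B' = yu⁻¹ * (yu * B') := by rw [inv_mul_cancel_left]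
        _ = yu⁻¹ * (B * yu) := by rw [hglB]
        _ = yu⁻¹ * B * (yu⁻¹)⁻¹ := by rw [inv_inv, mul_assoc]

end
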